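/- Let (R,m,k) be a commutative noetherian local Cohen-Macaulay ring with canonical module C_R. If M is a balanced big Cohen-Macaulay R-module (every system of parameters is an M-regular sequence), then every associated prime p of M satisfies dim R/p = dim R; equivalently, Ass M consists of minimal primes of R. -/

import Mathlib

open CategoryTheory IsLocalRing

/-- The Ext group `Ext^n_R(A, M)` as an `R`-module. -/
noncomputable def extGroup (R : Type) [CommRing R] (A M : Type) [AddCommGroup A] [Module R A]
    [AddCommGroup M] [Module R M] (n : ℕ) : ModuleCat R :=
  ((Ext R (ModuleCat R) n).obj (Opposite.op (ModuleCat.of R A))).obj (ModuleCat.of R M)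

/-- The Tor group `Tor_n^R(A, M)` as an `R`-module. -/
noncomputable def torGroup (R : Type) [CommRing R] (A M : Type) [AddCommGroup A] [Module R A]
    [AddCommGroup M] [Module R M] (n : ℕ) : ModuleCat R :=
  ((Tor (ModuleCat R) n).obj (ModuleCat.of R A)).obj (ModuleCat.of R M)

/-- Ext-depth of a module over a local ring: `inf {j | Ext^j(k, M) ≠ 0}`, `⊤` if none. -/
noncomputable def edepth (R : Type) [CommRing R] [IsLocalRing R] (M : Type) [AddCommGroup M]
    [Module R M] : ℕ∞ :=
  sInf {n : ℕ∞ | ∃ j : ℕ, n = j ∧ Nontrivial (extGroup R (ResidueField R) M j)}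

/-- Ext-codepth of a module over a local ring: `inf {j | Tor_j(k, M) ≠ 0}`, `⊤` if none. -/
noncomputable def ecodepth (R : Type) [CommRing R] [IsLocalRing R] (M : Type) [AddCommGroup M]
    [Module R M] : ℕ∞ :=
  sInf {n : ℕ∞ | ∃ j : ℕ, n = j ∧ Nontrivial (torGroup R (ResidueField R) M j)}

/-- `xs` is a system of parameters for the `d`-dimensional local ring `R`. -/
def IsSOP (R : Type) [CommRing R] [IsLocalRing R] (d : ℕ) (xs : List R) : Prop :=
  xs.length = d ∧ (∀ x ∈ xs, x ∈ maximalIdeal R) ∧ ringKrullDim (R ⧸ Ideal.ofList xs) = 0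

section Aux

variable {R : Type} [CommRing R]

lemma auxKrullDimLe {α : Type} [Preorder α] {n : ℕ}
    (h : ∀ p : LTSeries α, p.length ≤ n) : Order.krullDim α ≤ (n : WithBot ℕ∞) :=
  iSup_le fun p => by exact_mod_cast h p

lemma ringKrullDim_quotient_eq (I : Ideal R) :
    ringKrullDim (R ⧸ I) = Order.krullDim {p : PrimeSpectrum R // I ≤ p.asIdeal} := by
  apply le_antisymm
  · apply Order.krullDim_le_of_strictMono
      (fun P => (⟨⟨P.asIdeal.comap (Ideal.Quotient.mk I), P.2.comap _⟩,
        le_trans (le_of_eq (Ideal.mk_ker (I := I)).symm) (Ideal.ker_le_comap _)⟩ :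
          {p : PrimeSpectrum R // I ≤ p.asIdeal}))
    intro P Q h
    rw [Subtype.mk_lt_mk, ← PrimeSpectrum.asIdeal_lt_asIdeal]
    exact lt_of_le_of_ne
      (Ideal.comap_mono ((PrimeSpectrum.asIdeal_le_asIdeal _ _).mpr h.le))
      (fun e => h.ne (PrimeSpectrum.ext (Ideal.comap_injective_of_surjective _
        Ideal.Quotient.mk_surjective e)))
  · apply Order.krullDim_le_of_strictMono
      (fun p => (⟨p.1.asIdeal.map (Ideal.Quotient.mk I),
        Ideal.map_isPrime_of_surjective Ideal.Quotient.mk_surjective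
          (by rw [Ideal.mk_ker]; exact p.2)⟩ : PrimeSpectrum (R ⧸ I)))
    intro a b h
    have hcm : ∀ (a : {p : PrimeSpectrum R // I ≤ p.asIdeal}),
        (a.1.asIdeal.map (Ideal.Quotient.mk I)).comap (Ideal.Quotient.mk I) = a.1.asIdeal := by
      intro a
      rw [Ideal.comap_map_of_surjective _ Ideal.Quotient.mk_surjective, ← RingHom.ker_eq_comap_bot,
        Ideal.mk_ker, sup_eq_left.mpr a.2]
    have hab : a.1.asIdeal < b.1.asIdeal :=
      (PrimeSpectrum.asIdeal_lt_asIdeal _ _).mpr (Subtype.coe_lt_coe.mpr h)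
    rw [← PrimeSpectrum.asIdeal_lt_asIdeal]
    refine lt_of_le_of_ne (Ideal.map_mono hab.le) (fun e => hab.ne ?_)
    simp only at e
    rw [← hcm a, ← hcm b]
    exact congrArg (Ideal.comap (Ideal.Quotient.mk I)) e

lemma auxDimDrop (I : Ideal R) (n : ℕ)
    (hI : ringKrullDim (R ⧸ I) ≤ ((n + 1 : ℕ) : WithBot ℕ∞)) (x : R)
    (hx : ∀ q ∈ I.minimalPrimes, ringKrullDim (R ⧸ q) = ((n + 1 : ℕ) : WithBot ℕ∞) → x ∉ q) :
    ringKrullDim (R ⧸ (I ⊔ Ideal.span {x})) ≤ (n : WithBot ℕ∞) := by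
  rw [ringKrullDim_quotient_eq]
  apply auxKrullDimLe
  intro c
  by_contra hlen
  push_neg at hlen
  haveI := c.head.1.2
  obtain ⟨q, hqmin, hqle⟩ := Ideal.exists_minimalPrimes_le
    (I := I) (J := c.head.1.asIdeal) (le_sup_left.trans c.head.2)
  have hqprime : q.IsPrime := hqmin.1.1
  have hqI : I ≤ q := hqmin.1.2
  rcases eq_or_lt_of_le hqle with heq | hlt
  · have hqall : ∀ i, q ≤ (c i).1.asIdeal := fun i => heq.le.trans
      ((PrimeSpectrum.asIdeal_le_asIdeal _ _).mpr
        (Subtype.coe_le_coe.mpr (c.monotone (Fin.zero_le i))))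
    let c' : LTSeries {p : PrimeSpectrum R // q ≤ p.asIdeal} :=
      ⟨c.length, fun i => ⟨(c i).1, hqall i⟩,
        fun i => c.step i⟩
    have h1 : ((n + 1 : ℕ) : WithBot ℕ∞) ≤ ringKrullDim (R ⧸ q) := by
      rw [ringKrullDim_quotient_eq]
      refine le_trans ?_ (Order.LTSeries.length_le_krullDim c')
      show ((n + 1 : ℕ) : WithBot ℕ∞) ≤ (c.length : WithBot ℕ∞)
      exact_mod_cast hlen
    have h2 : ringKrullDim (R ⧸ q) ≤ ((n + 1 : ℕ) : WithBot ℕ∞) := by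
      rw [ringKrullDim_quotient_eq]
      refine le_trans (Order.krullDim_le_of_strictMono
        (fun p => (⟨p.1, hqI.trans p.2⟩ : {p : PrimeSpectrum R // I ≤ p.asIdeal}))
        (fun a b h => Subtype.mk_lt_mk.mpr (Subtype.coe_lt_coe.mpr h))) ?_
      rw [← ringKrullDim_quotient_eq]; exact hI
    have hxq : x ∈ q := by
      rw [heq]
      exact c.head.2 ((le_sup_right : Ideal.span {x} ≤ I ⊔ Ideal.span {x}) (Ideal.subset_span (Set.mem_singleton x)))
    exact hx q hqmin (le_antisymm h2 h1) hxq
  · let cI : LTSeries {p : PrimeSpectrum R // I ≤ p.asIdeal} :=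
      ⟨c.length, fun i => ⟨(c i).1, le_sup_left.trans (c i).2⟩,
        fun i => c.step i⟩
    have hQlt : (⟨⟨q, hqprime⟩, hqI⟩ : {p : PrimeSpectrum R // I ≤ p.asIdeal}) < cI.head := by
      rw [Subtype.mk_lt_mk]
      exact (PrimeSpectrum.asIdeal_lt_asIdeal _ _).mp hlt
    have hlenle := Order.LTSeries.length_le_krullDim (cI.cons _ hQlt)
    rw [← ringKrullDim_quotient_eq] at hlenle
    have : ((c.length + 1 : ℕ) : WithBot ℕ∞) ≤ ((n + 1 : ℕ) : WithBot ℕ∞) := by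
      refine le_trans ?_ (hlenle.trans hI)
      simp only [RelSeries.cons_length]; exact le_rfl
    have : c.length + 1 ≤ n + 1 := by exact_mod_cast this
    omega

lemma auxExistsAvoid (J : Ideal R) (S : Set (Ideal R)) (hfin : S.Finite)
    (hprime : ∀ q ∈ S, q.IsPrime) (hnle : ∀ q ∈ S, ¬ J ≤ q) :
    ∃ x ∈ J, ∀ q ∈ S, x ∉ q := by
  classical
  have key := Ideal.subset_union_prime (s := hfin.toFinset) (f := id) ⊤ ⊤
    (fun i hi _ _ => hprime i (hfin.mem_toFinset.mp hi)) (I := J)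
  have hnot : ¬ ((J : Set R) ⊆ ⋃ i ∈ (hfin.toFinset : Set (Ideal R)), ((id i : Ideal R) : Set R)) := by
    rw [key]
    rintro ⟨i, hi, hle⟩
    exact hnle i (hfin.mem_toFinset.mp hi) hle
  rw [Set.not_subset] at hnot
  obtain ⟨x, hxJ, hxn⟩ := hnot
  exact ⟨x, hxJ, fun q hq hxq => hxn
    (Set.mem_biUnion (hfin.mem_toFinset.mpr hq) hxq)⟩

lemma auxMinimalPrimesFinite [IsNoetherianRing R] (I : Ideal R) : I.minimalPrimes.Finite := by
  rw [Ideal.minimalPrimes_eq_comap]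
  exact (minimalPrimes.finite_of_isNoetherianRing (R ⧸ I)).image _

open IsLocalRing in
lemma auxSopComplete [IsNoetherianRing R] [IsLocalRing R] :
    ∀ (n : ℕ) (I : Ideal R), I ≤ maximalIdeal R → ringKrullDim (R ⧸ I) ≤ (n : WithBot ℕ∞) →
    ∃ ys : List R, ys.length = n ∧ (∀ y ∈ ys, y ∈ maximalIdeal R) ∧
      ringKrullDim (R ⧸ (I ⊔ Ideal.ofList ys)) ≤ 0
  | 0, I, _, hdim => ⟨[], rfl, by simp, by
      have he : I ⊔ Ideal.ofList ([] : List R) = I := by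
        rw [Ideal.ofList_nil, sup_bot_eq]
      rw [he]; exact hdim⟩
  | (n+1), I, hIm, hdim => by
    obtain ⟨x, hxm, hx⟩ := auxExistsAvoid (maximalIdeal R)
      {q ∈ I.minimalPrimes | ringKrullDim (R ⧸ q) = ((n + 1 : ℕ) : WithBot ℕ∞)}
      ((auxMinimalPrimesFinite I).subset (fun q hq => hq.1))
      (fun q hq => hq.1.1.1)
      (fun q hq hle => by
        have hqm : q = maximalIdeal R :=
          le_antisymm (le_maximalIdeal hq.1.1.1.ne_top) hle
        have h0 : ringKrullDim (R ⧸ q) = 0 := by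
          subst hqm
          exact ringKrullDim_eq_zero_of_isField
            ((Ideal.Quotient.maximal_ideal_iff_isField_quotient _).mp
              (IsLocalRing.maximalIdeal.isMaximal R))
        rw [hq.2] at h0
        have : (n + 1 : ℕ) = 0 := by exact_mod_cast h0
        omega)
    have hdrop := auxDimDrop I n hdim x (fun q hq hq' => hx q ⟨hq, hq'⟩)
    obtain ⟨ys, hlen, hmem, hdim0⟩ := auxSopComplete n (I ⊔ Ideal.span {x})
      (sup_le hIm (Ideal.span_le.mpr (by simpa using hxm))) hdrop
    refine ⟨x :: ys, by simp [hlen], ?_, ?_⟩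
    · intro y hy
      rcases List.mem_cons.mp hy with rfl | h
      · exact hxm
      · exact hmem y h
    · rwa [Ideal.ofList_cons, ← sup_assoc]

end Aux

/-- Sharp: associated primes of a balanced big Cohen-Macaulay module over a
Cohen-Macaulay local ring with canonical module are minimal, i.e. `dim R/p = dim R`. -/
theorem bbCM_associated_primes_minimal (R : Type) [CommRing R] [IsNoetherianRing R]
    [IsLocalRing R] (d : ℕ) (hdim : ringKrullDim R = d) (hCM : edepth R R = (d : ℕ∞))
    (C : Type) [AddCommGroup C] [Module R C] [Module.Finite R C]
    (hMCM : edepth R C = (d : ℕ∞))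
    (hcan : ∀ i : ℕ, i ≠ d → Subsingleton ↥(extGroup R (ResidueField R) C i))
    (hcan' : Nonempty (↥(extGroup R (ResidueField R) C d) ≃ₗ[R] ResidueField R))
    (M : Type) [AddCommGroup M] [Module R M]
    (hbbCM : ∀ xs : List R, IsSOP R d xs → RingTheory.Sequence.IsRegular M xs)
    (p : Ideal R) (hp : IsAssociatedPrime p M) :
    ringKrullDim (R ⧸ p) = ringKrullDim R := by

  obtain ⟨hpPrime, m0, hm0⟩ := isAssociatedPrime_iff.mp hp
  rw [hdim]
  by_contra hne
  have hle : ringKrullDim (R ⧸ p) ≤ (d : WithBot ℕ∞) := hdim ▸ ringKrullDim_quotient_le p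
  haveI : Nontrivial (R ⧸ p) := Ideal.Quotient.nontrivial_iff.mpr hpPrime.ne_top
  have h0 : (0 : WithBot ℕ∞) ≤ ringKrullDim (R ⧸ p) := ringKrullDim_nonneg_of_nontrivial
  have hlt : ringKrullDim (R ⧸ p) < (d : WithBot ℕ∞) := lt_of_le_of_ne hle hne
  obtain ⟨n, rfl⟩ : ∃ n, d = n + 1 := by
    cases d with
    | zero => exact absurd (h0.trans_lt hlt) (by norm_num)
    | succ n => exact ⟨n, rfl⟩
  obtain ⟨x, hxp, hx⟩ := auxExistsAvoid p
    {q ∈ (⊥ : Ideal R).minimalPrimes | ringKrullDim (R ⧸ q) = ((n + 1 : ℕ) : WithBot ℕ∞)}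
    ((auxMinimalPrimesFinite ⊥).subset fun q hq => hq.1)
    (fun q hq => hq.1.1.1)
    (fun q hq hpq => by
      have : p = q := le_antisymm hpq (hq.1.2 ⟨hpPrime, bot_le⟩ hpq)
      exact hne (by rw [this]; exact_mod_cast hq.2))
  have hbot : ringKrullDim (R ⧸ (⊥ : Ideal R)) ≤ ((n + 1 : ℕ) : WithBot ℕ∞) := by
    rw [ringKrullDim_eq_of_ringEquiv (RingEquiv.quotientBot R), hdim]
  have hdrop := auxDimDrop ⊥ n hbot x (fun q hq hq' => hx q ⟨hq, hq'⟩)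
  rw [bot_sup_eq] at hdrop
  have hxm : x ∈ maximalIdeal R := le_maximalIdeal hpPrime.ne_top hxp
  obtain ⟨ys, hlen, hmem, hdim0⟩ := auxSopComplete n (Ideal.span {x})
    (Ideal.span_le.mpr (by simpa using hxm)) hdrop
  have hsop : (x :: ys).length = n + 1 ∧ (∀ y ∈ (x :: ys), y ∈ maximalIdeal R) ∧
      ringKrullDim (R ⧸ Ideal.ofList (x :: ys)) = 0 := by
    refine ⟨by simp [hlen], ?_, ?_⟩
    · intro y hy
      rcases List.mem_cons.mp hy with rfl | h
      · exact hxm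
      · exact hmem y h
    · have hne' : Ideal.ofList (x :: ys) ≠ ⊤ := by
        intro htop
        refine (maximalIdeal.isMaximal R).ne_top (top_le_iff.mp ?_)
        rw [← htop]
        refine Ideal.span_le.mpr ?_
        rintro r hr
        rcases List.mem_cons.mp hr with rfl | h
        · exact hxm
        · exact hmem r h
      haveI : Nontrivial (R ⧸ Ideal.ofList (x :: ys)) := Ideal.Quotient.nontrivial_iff.mpr hne'
      refine le_antisymm ?_ ringKrullDim_nonneg_of_nontrivial
      rw [Ideal.ofList_cons]
      exact hdim0
  have hreg := hbbCM (x :: ys) hsop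
  have hwr := hreg.toIsWeaklyRegular
  rw [RingTheory.Sequence.isWeaklyRegular_cons_iff] at hwr
  have hsmul : IsSMulRegular M x := hwr.1
  have hm0ne : m0 ≠ 0 := by
    rintro rfl
    apply hpPrime.ne_top
    rw [hm0, Submodule.colon_singleton_zero]
  have hxm0 : x • m0 = 0 := by
    rw [hm0] at hxp
    exact (Submodule.mem_bot R).mp (Submodule.mem_colon_singleton.mp hxp)
  exact hm0ne (hsmul (show x • m0 = x • 0 by rw [hxm0, smul_zero]))
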